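/- arXiv:1308.5918 — 2 statements merged into one kernel-verified Lean document; each statement's English description precedes it below -/
import Mathlib

section
/- Under the hypotheses of the magic property (T(t)=Θ'(t²)t strictly increasing), at every point x where u^ε is differentiable one has |Du^ε(x)| ≥ (1/ε) T(|x − x^ε|), where x^ε is the unique maximizing point in the flat sup-convolution at x. -/
/-!
Since `x^ε` realizes the supremum at `x`, while testing the supremum at any `z` against `x^ε`
(a limit of points of `Ω`) gives `u^ε(z) ≥ u(x^ε) - Θ(|z - x^ε|²)/(2ε)`, the function
`z ↦ u^ε(z) + Θ(|z - x^ε|²)/(2ε)` has a local minimum at `x`. Fermat's rule then yields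
`Du^ε(x) = -(Θ'(|x - x^ε|²)/ε) (x - x^ε)`, whose norm is `|T(|x - x^ε|)|/ε`.
-/

open Filter Topology Set

theorem nonneg_of_monotoneOn_of_tendsto_nhdsGT_zero {Θ : ℝ → ℝ} (hmono : MonotoneOn Θ (Ioi 0))
    (h0 : Tendsto Θ (𝓝[>] 0) (𝓝 0)) {t : ℝ} (ht : 0 < t) : 0 ≤ Θ t := by
  refine le_of_tendsto h0 ?_
  filter_upwards [Ioo_mem_nhdsGT ht] with s hs
  exact hmono hs.1 ht hs.2.le

theorem ContinuousWithinAt.le_ciSup_of_mem_closure {α : Type*} [TopologicalSpace α] {f : α → ℝ}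
    {s : Set α} {y : α} (hf : ContinuousWithinAt f s y) (hy : y ∈ closure s)
    (hb : BddAbove (range fun x : s => f x)) : f y ≤ ⨆ x : s, f x := by
  have hsub : f '' s ⊆ Iic (⨆ x : s, f x) := by
    rintro _ ⟨x, hx, rfl⟩
    exact le_ciSup hb ⟨x, hx⟩
  exact closure_minimal hsub isClosed_Iic (hf.mem_closure_image hy)

section Gradient

variable {F : Type*} [NormedAddCommGroup F] [InnerProductSpace ℝ F] [CompleteSpace F]

theorem IsLocalMin.hasGradientAt_eq_zero {f : F → ℝ} {g x : F} (h : IsLocalMin f x)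
    (hf : HasGradientAt f g x) : g = 0 :=
  (InnerProductSpace.toDual ℝ F).map_eq_zero_iff.mp (h.hasFDerivAt_eq_zero hf)

theorem HasGradientAt.add {f h : F → ℝ} {g p x : F} (hf : HasGradientAt f g x)
    (hh : HasGradientAt h p x) : HasGradientAt (fun z => f z + h z) (g + p) x := by
  rw [hasGradientAt_iff_hasFDerivAt, map_add]
  exact HasFDerivAt.add hf hh

theorem HasGradientAt.div_const {f : F → ℝ} {g x : F} (hf : HasGradientAt f g x) (c : ℝ) :
    HasGradientAt (fun z => f z / c) (c⁻¹ • g) x := by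
  rw [hasGradientAt_iff_hasFDerivAt, map_smul]
  simpa only [div_eq_mul_inv] using HasFDerivAt.mul_const hf c⁻¹

theorem HasDerivAt.hasGradientAt_comp_norm_sub_sq {Θ : ℝ → ℝ} {θ' : ℝ} {a x : F}
    (hΘ : HasDerivAt Θ θ' (‖x - a‖ ^ 2)) :
    HasGradientAt (fun z => Θ (‖z - a‖ ^ 2)) ((2 * θ') • (x - a)) x := by
  rw [hasGradientAt_iff_hasFDerivAt]
  have := hΘ.comp_hasFDerivAt x ((hasFDerivAt_id x).sub_const a).norm_sq
  refine this.congr_fderiv ?_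
  ext v
  simp [InnerProductSpace.toDual_apply_apply]
  ring

end Gradient

section FlatSupConv

variable {E : Type*} [NormedAddCommGroup E]

noncomputable def flatSupConv (Ω : Set E) (u : E → ℝ) (Θ : ℝ → ℝ) (ε : ℝ) (x : E) : ℝ :=
  ⨆ y : Ω, (u y - Θ (‖x - y‖ ^ 2) / (2 * ε))

variable {Ω : Set E} {u : E → ℝ} {Θ : ℝ → ℝ} {ε : ℝ}

theorem bddAbove_range_flatSupConv (hu : BddAbove (u '' Ω)) (hΘ : ∀ s, 0 < s → 0 ≤ Θ s)
    (hε : 0 ≤ ε) (z : E) :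
    BddAbove (range fun y : Ω => u y - Θ (‖z - y‖ ^ 2) / (2 * ε)) := by
  obtain ⟨M, hM⟩ := hu
  refine ⟨M - min (Θ 0) 0 / (2 * ε), ?_⟩
  rintro _ ⟨y, rfl⟩
  have hΘmin : min (Θ 0) 0 ≤ Θ (‖z - y‖ ^ 2) := by
    rcases (sq_nonneg ‖z - y‖).eq_or_lt with h | h
    · rw [← h]; exact min_le_left _ _
    · exact (min_le_right _ _).trans (hΘ _ h)
  have := div_le_div_of_nonneg_right hΘmin (by positivity : (0 : ℝ) ≤ 2 * ε)
  linarith [hM (mem_image_of_mem u y.2)]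

theorem le_flatSupConv_of_mem_closure
    (hbdd : ∀ z : E, BddAbove (range fun y : Ω => u y - Θ (‖z - y‖ ^ 2) / (2 * ε)))
    {y z : E} (hy : y ∈ closure Ω) (hu : ContinuousWithinAt u Ω y)
    (hΘ : ContinuousAt Θ (‖z - y‖ ^ 2)) :
    u y - Θ (‖z - y‖ ^ 2) / (2 * ε) ≤ flatSupConv Ω u Θ ε z := by
  have hcont : ContinuousWithinAt (fun y => u y - Θ (‖z - y‖ ^ 2) / (2 * ε)) Ω y :=
    hu.sub ((hΘ.comp_continuousWithinAt (f := fun y => ‖z - y‖ ^ 2)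
      (by fun_prop)).div_const _)
  exact hcont.le_ciSup_of_mem_closure hy (hbdd z)

theorem isLocalMin_flatSupConv_add
    (hbdd : ∀ z : E, BddAbove (range fun y : Ω => u y - Θ (‖z - y‖ ^ 2) / (2 * ε)))
    (hΘ : ContinuousOn Θ (Ioi 0)) {x xe : E} (hxe : xe ∈ closure Ω)
    (hu : ContinuousWithinAt u Ω xe) (hne : x ≠ xe)
    (hmax : flatSupConv Ω u Θ ε x = u xe - Θ (‖x - xe‖ ^ 2) / (2 * ε)) :
    IsLocalMin (fun z => flatSupConv Ω u Θ ε z + Θ (‖z - xe‖ ^ 2) / (2 * ε)) x := by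
  filter_upwards [isOpen_ne.mem_nhds hne] with z hz
  have hpos : 0 < ‖z - xe‖ ^ 2 := pow_pos (norm_pos_iff.mpr (sub_ne_zero.mpr hz)) 2
  have := le_flatSupConv_of_mem_closure hbdd hxe hu
    (hΘ.continuousAt (isOpen_Ioi.mem_nhds hpos))
  simp only [hmax]
  linarith

theorem flatSupConv_gradient_eq [InnerProductSpace ℝ E] [CompleteSpace E]
    (hbdd : ∀ z : E, BddAbove (range fun y : Ω => u y - Θ (‖z - y‖ ^ 2) / (2 * ε)))
    (hΘ : ContinuousOn Θ (Ioi 0)) {x xe g : E} {θ' : ℝ} (hxe : xe ∈ closure Ω)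
    (hu : ContinuousWithinAt u Ω xe) (hne : x ≠ xe)
    (hmax : flatSupConv Ω u Θ ε x = u xe - Θ (‖x - xe‖ ^ 2) / (2 * ε))
    (hθ' : HasDerivAt Θ θ' (‖x - xe‖ ^ 2)) (hg : HasGradientAt (flatSupConv Ω u Θ ε) g x) :
    g = -(θ' / ε) • (x - xe) := by
  have hzero := (isLocalMin_flatSupConv_add hbdd hΘ hxe hu hne hmax).hasGradientAt_eq_zero
    (hg.add (hθ'.hasGradientAt_comp_norm_sub_sq.div_const (2 * ε)))
  rw [smul_smul, add_eq_zero_iff_eq_neg] at hzero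
  rw [hzero, ← neg_smul]
  congr 2
  ring

end FlatSupConv

theorem flat_sup_convolution_gradient_lower_bound_general {n : ℕ}
    (Ω : Set (EuclideanSpace ℝ (Fin n)))
    (hΩbd : Bornology.IsBounded Ω)
    (u : EuclideanSpace ℝ (Fin n) → ℝ)
    (hu : ContinuousOn u (closure Ω))
    (Θ : ℝ → ℝ)
    (hΘC2 : ContDiffOn ℝ 2 Θ (Set.Ioi 0))
    (hΘmono : StrictMonoOn Θ (Set.Ioi 0))
    (hΘ0 : Tendsto Θ (nhdsWithin 0 (Set.Ioi 0)) (nhds 0))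
    (ε : ℝ) (hε : 0 < ε)
    (uε : EuclideanSpace ℝ (Fin n) → ℝ)
    (huε : ∀ x, uε x = ⨆ y : Ω, (u y - Θ (‖x - (y : EuclideanSpace ℝ (Fin n))‖^2) / (2*ε)))
    (x : EuclideanSpace ℝ (Fin n))
    (xe : EuclideanSpace ℝ (Fin n)) (hxe : xe ∈ closure Ω)
    (hmax : uε x = u xe - Θ (‖x - xe‖^2) / (2*ε))
    (g : EuclideanSpace ℝ (Fin n)) (hg : HasGradientAt uε g x) :
    (1/ε) * (deriv Θ (‖x - xe‖^2) * ‖x - xe‖) ≤ ‖g‖ := by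
  obtain rfl : uε = flatSupConv Ω u Θ ε := funext huε
  rcases eq_or_ne x xe with rfl | hne
  · simp
  have hbdd := bddAbove_range_flatSupConv
    ((hΩbd.isCompact_closure.image_of_continuousOn hu).bddAbove.mono (image_mono subset_closure))
    (fun _ hs => nonneg_of_monotoneOn_of_tendsto_nhdsGT_zero hΘmono.monotoneOn hΘ0 hs) hε.le
  have hr : 0 < ‖x - xe‖ ^ 2 := pow_pos (norm_pos_iff.mpr (sub_ne_zero.mpr hne)) 2
  have hθ' : HasDerivAt Θ (deriv Θ (‖x - xe‖ ^ 2)) (‖x - xe‖ ^ 2) :=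
    ((hΘC2.differentiableOn two_ne_zero).differentiableAt (isOpen_Ioi.mem_nhds hr)).hasDerivAt
  rw [flatSupConv_gradient_eq hbdd hΘC2.continuousOn hxe ((hu xe hxe).mono subset_closure) hne
    hmax hθ' hg, norm_smul, norm_neg, Real.norm_eq_abs]
  calc (1 / ε) * (deriv Θ (‖x - xe‖ ^ 2) * ‖x - xe‖)
      = deriv Θ (‖x - xe‖ ^ 2) / ε * ‖x - xe‖ := by ring
    _ ≤ |deriv Θ (‖x - xe‖ ^ 2) / ε| * ‖x - xe‖ := by gcongr; exact le_abs_self _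

/-- Gradient lower bound for flat sup-convolutions: at any differentiability point `x`
of `u^ε`, `|Du^ε(x)| ≥ (1/ε)·T(|x − x^ε|)` where `T(t) = Θ'(t²)t` and `x^ε` is a
maximizing point of the sup-convolution at `x`. -/
theorem flat_sup_convolution_gradient_lower_bound {n : ℕ}
    (Ω : Set (EuclideanSpace ℝ (Fin n)))
    (hΩbd : Bornology.IsBounded Ω) (hΩne : Ω.Nonempty)
    (d : ℝ) (hd : d = Metric.diam Ω)
    (u : EuclideanSpace ℝ (Fin n) → ℝ)
    (hu : ContinuousOn u (closure Ω))
    (Θ : ℝ → ℝ)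
    (hΘC2 : ContDiffOn ℝ 2 Θ (Set.Ioi 0))
    (hΘmono : StrictMonoOn Θ (Set.Ioi 0))
    (hΘ0 : Tendsto Θ (nhdsWithin 0 (Set.Ioi 0)) (nhds 0))
    (hΘ'0 : Tendsto (deriv Θ) (nhdsWithin 0 (Set.Ioi 0)) (nhds 0))
    (hT : StrictMonoOn (fun t => deriv Θ (t^2) * t) (Set.Ioo 0 d))
    (ε : ℝ) (hε : 0 < ε)
    (uε : EuclideanSpace ℝ (Fin n) → ℝ)
    (huε : ∀ x, uε x = ⨆ y : Ω, (u y - Θ (‖x - (y : EuclideanSpace ℝ (Fin n))‖^2) / (2*ε)))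
    (x : EuclideanSpace ℝ (Fin n)) (hx : x ∈ Ω)
    (xe : EuclideanSpace ℝ (Fin n)) (hxe : xe ∈ closure Ω)
    (hmax : uε x = u xe - Θ (‖x - xe‖^2) / (2*ε))
    (g : EuclideanSpace ℝ (Fin n)) (hg : HasGradientAt uε g x) :
    (1/ε) * (deriv Θ (‖x - xe‖^2) * ‖x - xe‖) ≤ ‖g‖ :=
  flat_sup_convolution_gradient_lower_bound_general Ω hΩbd u hu Θ hΘC2 hΘmono hΘ0 ε hε uε huε x xe
    hxe hmax g hg
end

section
/- Let u be locally Lipschitz on Ω and u^ε its flat sup-convolution with a kernel Θ satisfying the magic property. Then for any Ω' ⋐ Ω, ‖Du^ε‖_{L^∞(Ω'^ε)} ≤ ‖Du‖_{L^∞(Ω')}, where Ω'^ε = {x ∈ Ω' : dist(x, ∂Ω') > ρ(ε)} and ρ(ε) = √(Θ⁻¹(4‖u‖_{C⁰} ε)). -/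
open Filter

/-- The Lipschitz constant does not increase under flat sup-convolution: if `u` is
Lipschitz on `Ω'` with constant `L`, then `‖Du^ε‖_{L^∞(Ω'^ε)} ≤ L`, where
`Ω'^ε = {x ∈ Ω' : dist(x, ∂Ω') > ρ(ε)}` and `ρ(ε) = √(Θ⁻¹(4‖u‖_{C⁰}ε))`. -/
theorem flat_sup_convolution_lipschitz_bound {n : ℕ}
    (Ω' : Set (EuclideanSpace ℝ (Fin n)))
    (hΩ'open : IsOpen Ω') (hΩ'bd : Bornology.IsBounded Ω') (hΩ'ne : Ω'.Nonempty)
    (d : ℝ) (hd : d = Metric.diam Ω')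
    (u : EuclideanSpace ℝ (Fin n) → ℝ)
    (L : NNReal) (hLip : LipschitzOnWith L u Ω')
    (hu : ContinuousOn u (closure Ω'))
    (Θ Θinv : ℝ → ℝ)
    (hΘC2 : ContDiffOn ℝ 2 Θ (Set.Ioi 0))
    (hΘmono : StrictMonoOn Θ (Set.Ioi 0))
    (hΘpos : ∀ t > (0:ℝ), 0 < Θ t)
    (hΘ0 : Tendsto Θ (nhdsWithin 0 (Set.Ioi 0)) (nhds 0))
    (hΘ'0 : Tendsto (deriv Θ) (nhdsWithin 0 (Set.Ioi 0)) (nhds 0))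
    (hT : StrictMonoOn (fun t => deriv Θ (t^2) * t) (Set.Ioo 0 d))
    (hinv : ∀ t > (0:ℝ), Θinv (Θ t) = t)
    (hinvmono : MonotoneOn Θinv (Set.Ioi 0))
    (M : ℝ) (hM : ∀ y ∈ closure Ω', |u y| ≤ M)
    (ε : ℝ) (hε : 0 < ε)
    (uε : EuclideanSpace ℝ (Fin n) → ℝ)
    (huε : ∀ x, uε x = ⨆ y : Ω', (u y - Θ (‖x - (y : EuclideanSpace ℝ (Fin n))‖^2) / (2*ε))) :
    ∀ x ∈ Ω', Real.sqrt (Θinv (4 * M * ε)) < Metric.infDist x (frontier Ω') →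
      ∀ g : EuclideanSpace ℝ (Fin n), HasGradientAt uε g x → ‖g‖ ≤ L := by
  intro x hx hρx g hg
  classical
  set ρ : ℝ := Real.sqrt (Θinv (4 * M * ε)) with hρdef
  have hρ0 : 0 ≤ ρ := Real.sqrt_nonneg _
  have hε2 : (0:ℝ) < 2 * ε := by linarith
  have hne : Nonempty Ω' := hΩ'ne.to_subtype
  -- the defining family is bounded above
  have hbdd : ∀ z, BddAbove (Set.range fun y : Ω' =>
      u y - Θ (‖z - (y : EuclideanSpace ℝ (Fin n))‖^2) / (2*ε)) := by
    intro z
    refine ⟨M + |Θ 0| / (2*ε), ?_⟩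
    rintro _ ⟨y, rfl⟩
    have h1 : u y ≤ M := le_of_abs_le (hM y (subset_closure y.2))
    have h2 : -(Θ (‖z - (y : EuclideanSpace ℝ (Fin n))‖^2) / (2*ε)) ≤ |Θ 0| / (2*ε) := by
      rcases eq_or_lt_of_le (sq_nonneg ‖z - (y : EuclideanSpace ℝ (Fin n))‖) with h | h
      · rw [← h, ← neg_div]
        have h3 : -(Θ 0) ≤ |Θ 0| := neg_le_abs _
        gcongr
      · have hp := hΘpos _ h
        have : 0 ≤ Θ (‖z - (y : EuclideanSpace ℝ (Fin n))‖^2) / (2*ε) :=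
          div_nonneg hp.le hε2.le
        have : 0 ≤ |Θ 0| / (2*ε) := div_nonneg (abs_nonneg _) hε2.le
        linarith [div_nonneg (hΘpos _ h).le hε2.le]
    have := h2
    simp only [Set.mem_setOf_eq]
    linarith
  -- each term is at most the sup
  have key_le : ∀ z (y : EuclideanSpace ℝ (Fin n)), y ∈ Ω' →
      u y - Θ (‖z - y‖^2) / (2*ε) ≤ uε z := by
    intro z y hy
    rw [huε z]
    exact le_ciSup (hbdd z) ⟨y, hy⟩
  have sup_le : ∀ z c, (∀ y : Ω', u y - Θ (‖z - (y : EuclideanSpace ℝ (Fin n))‖^2)/(2*ε) ≤ c) →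
      uε z ≤ c := by
    intro z c h; rw [huε z]; exact ciSup_le h
  -- Claim A : near-optimal points are within ρ
  have claimA : ∀ z ∈ Ω', ∀ y ∈ Ω', u z ≤ u y - Θ (‖z - y‖^2)/(2*ε) → ‖z - y‖ ≤ ρ := by
    intro z hz y hy h
    rcases eq_or_lt_of_le (sq_nonneg ‖z - y‖) with h0 | h0
    · have : ‖z - y‖ = 0 := by nlinarith [norm_nonneg (z - y)]
      rw [this]; exact hρ0
    · have hΘt : 0 < Θ (‖z - y‖^2) := hΘpos _ h0
      have hyM := abs_le.1 (hM y (subset_closure hy))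
      have hzM := abs_le.1 (hM z (subset_closure hz))
      have hub : Θ (‖z - y‖^2) ≤ 4*M*ε := by
        have hq : Θ (‖z - y‖^2)/(2*ε) ≤ u y - u z := by linarith
        have : Θ (‖z - y‖^2)/(2*ε) ≤ 2*M := by linarith
        calc Θ (‖z - y‖^2) = Θ (‖z - y‖^2)/(2*ε) * (2*ε) := by field_simp
          _ ≤ 2*M*(2*ε) := by nlinarith
          _ = 4*M*ε := by ring
      have ht : ‖z - y‖^2 ≤ Θinv (4*M*ε) := by
        calc ‖z - y‖^2 = Θinv (Θ (‖z - y‖^2)) := (hinv _ h0).symm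
          _ ≤ Θinv (4*M*ε) := hinvmono hΘt (lt_of_lt_of_le hΘt hub) hub
      calc ‖z - y‖ = Real.sqrt (‖z - y‖^2) := (Real.sqrt_sq (norm_nonneg _)).symm
        _ ≤ ρ := Real.sqrt_le_sqrt ht
  -- the ball of radius infDist to the frontier is inside Ω'
  have hball : ∀ z ∈ Ω', Metric.ball z (Metric.infDist z (frontier Ω')) ⊆ Ω' := by
    intro z hz
    set r := Metric.infDist z (frontier Ω') with hr
    rcases le_or_gt r 0 with h | h
    · rw [Metric.ball_eq_empty.2 h]; exact Set.empty_subset _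
    · have hconn : IsPreconnected (Metric.ball z r) := (convex_ball z r).isPreconnected
      have hsub : Metric.ball z r ⊆ Ω' ∪ (closure Ω')ᶜ := by
        intro p hp
        by_contra hcon
        simp only [Set.mem_union, Set.mem_compl_iff, not_or, not_not] at hcon
        have hpf : p ∈ frontier Ω' := by
          rw [hΩ'open.frontier_eq]; exact ⟨hcon.2, hcon.1⟩
        have h1 := Metric.infDist_le_dist_of_mem hpf (x := z)
        rw [Metric.mem_ball, dist_comm] at hp
        rw [← hr] at h1
        linarith
      refine hconn.subset_left_of_subset_union hΩ'open isClosed_closure.isOpen_compl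
        (Set.disjoint_left.mpr fun p hp hpc => hpc (subset_closure hp)) hsub
        ⟨z, Metric.mem_ball_self h, hz⟩
  -- frontier is nonempty (otherwise the hypothesis at x is absurd)
  have hfr_ne : (frontier Ω').Nonempty := by
    by_contra h
    rw [Set.not_nonempty_iff_eq_empty] at h
    rw [h, Metric.infDist_empty] at hρx
    exact absurd hρx (not_lt.2 hρ0)
  obtain ⟨w, hwf⟩ := hfr_ne
  have hwx : w ≠ x := by
    intro hwx
    have hxf : x ∈ Ω' ∩ frontier Ω' := ⟨hx, hwx ▸ hwf⟩
    rw [hΩ'open.inter_frontier_eq] at hxf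
    exact hxf
  have hv : (0:ℝ) < ‖w - x‖ := by
    rw [norm_pos_iff, sub_ne_zero]; exact hwx
  set unit : EuclideanSpace ℝ (Fin n) := ‖w - x‖⁻¹ • (w - x) with hunit
  have hunitnorm : ‖unit‖ = 1 := by
    rw [hunit, norm_smul, norm_inv, norm_norm, inv_mul_cancel₀ (ne_of_gt hv)]
  -- Claim C : uε ≥ u on Ω'
  have claimC : ∀ z ∈ Ω', u z ≤ uε z := by
    intro z hz
    by_contra hcon
    push_neg at hcon
    set δ : ℝ := (u z - uε z)/2 with hδ
    have hδpos : 0 < δ := by rw [hδ]; linarith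
    have hεδ : (0:ℝ) < ε * δ := mul_pos hε hδpos
    -- continuity of u at z
    have hcz : ContinuousAt u z :=
      hu.continuousAt (Filter.mem_of_superset (hΩ'open.mem_nhds hz) subset_closure)
    obtain ⟨η1, hη1, hcont⟩ := Metric.continuousAt_iff.1 hcz (δ/2) (by linarith)
    -- smallness of Θ near 0
    have hmem : Θ ⁻¹' (Set.Iio (ε*δ)) ∈ nhdsWithin 0 (Set.Ioi 0) := by
      have := hΘ0 (Iio_mem_nhds hεδ)
      rwa [Filter.mem_map] at this
    obtain ⟨η2, hη2, hsub2⟩ := mem_nhdsGT_iff_exists_Ioo_subset.1 hmem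
    have hη2' : (0:ℝ) < η2 := hη2
    -- a ball inside Ω'
    obtain ⟨η3, hη3, hball3⟩ := Metric.isOpen_iff.1 hΩ'open z hz
    set s : ℝ := min (min η1 (Real.sqrt η2)) η3 / 2 with hs
    have hsqrt : (0:ℝ) < Real.sqrt η2 := Real.sqrt_pos.2 hη2'
    have hspos : 0 < s := by
      rw [hs]
      have : 0 < min (min η1 (Real.sqrt η2)) η3 := lt_min (lt_min hη1 hsqrt) hη3
      linarith
    set y : EuclideanSpace ℝ (Fin n) := z + s • unit with hy
    have hzy : ‖z - y‖ = s := by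
      have : z - y = -(s • unit) := by rw [hy]; abel
      rw [this, norm_neg, norm_smul, hunitnorm, mul_one, Real.norm_eq_abs,
        abs_of_pos hspos]
    have hdistyz : dist y z = s := by
      rw [dist_comm, dist_eq_norm, hzy]
    have hyΩ : y ∈ Ω' := by
      apply hball3
      rw [Metric.mem_ball, hdistyz, hs]
      have : min (min η1 (Real.sqrt η2)) η3 ≤ η3 := min_le_right _ _
      linarith
    have hΘsmall : Θ (‖z - y‖^2) < ε*δ := by
      apply hsub2
      rw [hzy]
      constructor
      · positivity
      · have h1 : s ≤ Real.sqrt η2 / 2 := by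
          rw [hs]
          have : min (min η1 (Real.sqrt η2)) η3 ≤ Real.sqrt η2 :=
            (min_le_left _ _).trans (min_le_right _ _)
          linarith
        have h2 : Real.sqrt η2 ^ 2 = η2 := Real.sq_sqrt hη2'.le
        nlinarith
    have hucont : |u y - u z| < δ/2 := by
      have := hcont (by rw [hdistyz, hs]; have : min (min η1 (Real.sqrt η2)) η3 ≤ η1 :=
        (min_le_left _ _).trans (min_le_left _ _); linarith)
      rwa [Real.dist_eq] at this
    have hkey := key_le z y hyΩ
    have hΘdiv : Θ (‖z - y‖^2)/(2*ε) < δ/2 := by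
      rw [div_lt_iff₀ hε2]
      calc Θ (‖z - y‖^2) < ε*δ := hΘsmall
        _ = δ/2 * (2*ε) := by ring
    have := abs_lt.1 hucont
    have : u z < uε z + δ := by linarith
    rw [hδ] at this
    linarith
  -- Claim B : one-sided Lipschitz estimate
  have claimB : ∀ z ∈ Ω', ∀ z' ∈ Ω', ρ < Metric.infDist z' (frontier Ω') →
      uε z ≤ uε z' + L * ‖z - z'‖ := by
    intro z hz z' hz' hz'ρ
    apply sup_le
    rintro ⟨y, hy⟩
    simp only
    have hdzz : dist z z' = ‖z - z'‖ := dist_eq_norm _ _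
    by_cases hcase : u y - Θ (‖z - y‖^2)/(2*ε) ≤ u z
    · have hd := hLip.dist_le_mul z hz z' hz'
      rw [Real.dist_eq, hdzz] at hd
      have h1 : u z - u z' ≤ L * ‖z - z'‖ := (le_abs_self _).trans hd
      have h2 := claimC z' hz'
      linarith
    · push_neg at hcase
      have hA : ‖z - y‖ ≤ ρ := claimA z hz y hy hcase.le
      set y' : EuclideanSpace ℝ (Fin n) := y + (z' - z) with hy'
      have hdy'z' : dist y' z' = ‖z - y‖ := by
        rw [dist_eq_norm, hy']
        have : y + (z' - z) - z' = -(z - y) := by abel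
        rw [this, norm_neg]
      have hy'mem : y' ∈ Ω' := by
        apply hball z' hz'
        rw [Metric.mem_ball, hdy'z']
        exact lt_of_le_of_lt hA hz'ρ
      have hkey := key_le z' y' hy'mem
      have hnorm : ‖z' - y'‖ = ‖z - y‖ := by
        rw [hy']
        have : z' - (y + (z' - z)) = z - y := by abel
        rw [this]
      rw [hnorm] at hkey
      have hdy : dist y y' = ‖z - z'‖ := by
        rw [dist_eq_norm, hy']
        have : y - (y + (z' - z)) = -(z' - z) := by abel
        rw [this, norm_neg, norm_sub_rev]
      have hLy : u y - u y' ≤ L * ‖z - z'‖ := by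
        have hd := hLip.dist_le_mul y hy y' hy'mem
        rw [Real.dist_eq, hdy] at hd
        exact (le_abs_self _).trans hd
      linarith
  -- uε is Lipschitz on a ball around x
  set r : ℝ := Metric.infDist x (frontier Ω') with hrdef
  have hrρ : ρ < r := hρx
  have hxball : ∀ p ∈ Metric.ball x (r - ρ), p ∈ Ω' ∧ ρ < Metric.infDist p (frontier Ω') := by
    intro p hp
    rw [Metric.mem_ball] at hp
    have hpΩ : p ∈ Ω' := by
      apply hball x hx
      rw [Metric.mem_ball]
      linarith
    refine ⟨hpΩ, ?_⟩
    have := Metric.infDist_le_infDist_add_dist (x := x) (y := p) (s := frontier Ω')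
    rw [dist_comm] at this
    linarith
  have hLipOn : LipschitzOnWith L uε (Metric.ball x (r - ρ)) := by
    apply LipschitzOnWith.of_dist_le_mul
    intro p hp q hq
    obtain ⟨hpΩ, hpρ⟩ := hxball p hp
    obtain ⟨hqΩ, hqρ⟩ := hxball q hq
    have h1 := claimB p hpΩ q hqΩ hqρ
    have h2 := claimB q hqΩ p hpΩ hpρ
    rw [Real.dist_eq, abs_le]
    rw [dist_eq_norm]
    constructor
    · rw [norm_sub_rev] at h2; linarith
    · linarith
  have hmemnhds : Metric.ball x (r - ρ) ∈ nhds x := Metric.ball_mem_nhds x (by linarith)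
  have hfd := hg.hasFDerivAt.le_of_lipschitzOn hmemnhds hLipOn
  rwa [LinearIsometryEquiv.norm_map] at hfd
end
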